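/- Let (X, 𝒞) be an instance of 3-SAT, let (G, k) be the reduction graph built from (X, 𝒞), and define 𝒫 = {{v_x, v_x̄} : x ∈ X} and 𝒯 = {{u^C_p, u^C_q, u^C_r} : C = {p,q,r} ∈ 𝒞}. Then (G, 𝒫, 𝒯) is a valid instance of Partitioned Vertex Cover, and G has a vertex cover of size at most k if and only if (G, 𝒫, 𝒯) has a solution. -/

import Mathlib

open SimpleGraph

universe u

/-- A matching: a set of edges of `G` that are pairwise vertex-disjoint. -/
def IsMatching {W : Type u} (G : SimpleGraph W) (M : Set (Sym2 W)) : Prop :=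
  M ⊆ G.edgeSet ∧ ∀ e ∈ M, ∀ e' ∈ M, e ≠ e' → ∀ v : W, v ∈ e → v ∉ e'

/-- `v` is matched by `M`. -/
def Matched {W : Type u} (M : Set (Sym2 W)) (v : W) : Prop := ∃ w : W, s(v, w) ∈ M

open scoped Classical in
/-- `rank G pref M v = pref v (M(v))`, with the convention `|N(v)|+1` if `v` is unmatched. -/
noncomputable def rank {W : Type u} (G : SimpleGraph W) (pref : W → W → ℕ)
    (M : Set (Sym2 W)) (v : W) : ℕ :=
  if h : ∃ w : W, s(v, w) ∈ M then pref v h.choose else (G.neighborSet v).ncard + 1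

/-- The number of vertices preferring `M` over `M'`. -/
noncomputable def vote {W : Type u} (G : SimpleGraph W) (pref : W → W → ℕ)
    (M M' : Set (Sym2 W)) : ℕ :=
  {v : W | rank G pref M v < rank G pref M' v}.ncard

/-- A popular matching: no other matching is more popular. -/
def IsPopular {W : Type u} (G : SimpleGraph W) (pref : W → W → ℕ) (M : Set (Sym2 W)) : Prop :=
  IsMatching G M ∧
    ∀ M' : Set (Sym2 W), IsMatching G M' → vote G pref M' M ≤ vote G pref M M'

/-- Each vertex has a strict preference list: `pref v` is a bijection from the
neighborhood of `v` onto `{1, …, |N(v)|}`. -/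
def HasPref {W : Type u} (G : SimpleGraph W) (pref : W → W → ℕ) : Prop :=
  ∀ v : W, Set.BijOn (pref v) (G.neighborSet v) (Set.Icc 1 (G.neighborSet v).ncard)

/-- The edge `e ∉ M` is labeled `+2` by `label_M` (given rank function `rk`):
both endpoints prefer each other over their status in `M`. -/
def EdgePlus {W : Type u} (pref : W → W → ℕ) (rk : W → ℕ) (e : Sym2 W) : Prop :=
  ∃ x y : W, e = s(x, y) ∧ pref x y < rk x ∧ pref y x < rk y

/-- The edge `e ∉ M` is labeled `-2` by `label_M` (given rank function `rk`):
both endpoints prefer their status in `M` over each other. -/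
def EdgeMinus {W : Type u} (pref : W → W → ℕ) (rk : W → ℕ) (e : Sym2 W) : Prop :=
  ∃ x y : W, e = s(x, y) ∧ rk x < pref x y ∧ rk y < pref y x

/-- The graph `G_M`: the spanning subgraph of `G` consisting of the edges of `M`
together with the edges not labeled `-2`. -/
def GMgraph {W : Type u} (G : SimpleGraph W) (pref : W → W → ℕ) (M : Set (Sym2 W)) :
    SimpleGraph W where
  Adj x y := G.Adj x y ∧ (s(x, y) ∈ M ∨ ¬ EdgeMinus pref (rank G pref M) s(x, y))
  symm := by
    constructor
    intro x y h
    refine ⟨h.1.symm, ?_⟩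
    rw [Sym2.eq_swap]
    exact h.2
  loopless := ⟨fun x h => G.irrefl h.1⟩

/-- Consecutive edges alternate between `M` and non-`M`. -/
def altRel {W : Type u} (M : Set (Sym2 W)) (e e' : Sym2 W) : Prop := e ∈ M ↔ e' ∉ M

/-- An alternating path (with respect to `M`) in a graph `G'`. -/
def IsAltPath {W : Type u} (M : Set (Sym2 W)) {G' : SimpleGraph W} {x y : W}
    (p : G'.Walk x y) : Prop :=
  p.IsPath ∧ List.Chain' (altRel M) p.edges ∧
    (∀ e, p.edges.head? = some e → e ∉ M → ¬ Matched M x) ∧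
    (∀ e, p.edges.getLast? = some e → e ∉ M → ¬ Matched M y)

/-- An alternating cycle (with respect to `M`) in a graph `G'`:
the edges alternate cyclically between `M` and non-`M`. -/
def IsAltCycle {W : Type u} (M : Set (Sym2 W)) {G' : SimpleGraph W} {x : W}
    (p : G'.Walk x x) : Prop :=
  p.IsCycle ∧ List.Chain' (altRel M) (p.edges ++ p.edges.take 1)

/-- `l` contains at least one edge labeled `+2`. -/
def OnePlusEdge {W : Type u} (pref : W → W → ℕ) (rk : W → ℕ) (l : List (Sym2 W)) : Prop :=
  ∃ e ∈ l, EdgePlus pref rk e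

/-- `l` contains at least two edges labeled `+2`. -/
def TwoPlusEdges {W : Type u} (pref : W → W → ℕ) (rk : W → ℕ) (l : List (Sym2 W)) : Prop :=
  ∃ e ∈ l, ∃ e' ∈ l, e ≠ e' ∧ EdgePlus pref rk e ∧ EdgePlus pref rk e'

/-- A vertex cover. -/
def IsVC {V : Type u} (G : SimpleGraph V) (U : Set V) : Prop :=
  ∀ ⦃x y : V⦄, G.Adj x y → x ∈ U ∨ y ∈ U
/-- An instance of Partitioned Vertex Cover: `G` is a finite simple graph, `P` is a
collection of pairwise disjoint edges of `G`, `T` is a collection of pairwise disjoint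
3-element vertex sets each inducing a triangle in `G`, and every vertex of `G` lies in
exactly one member of `P ∪ T`. -/
def IsPVC {V : Type u} (G : SimpleGraph V) (P : Set (Sym2 V)) (T : Set (Finset V)) : Prop :=
  Finite V ∧
  P ⊆ G.edgeSet ∧
  (∀ e ∈ P, ∀ e' ∈ P, e ≠ e' → ∀ v : V, v ∈ e → v ∉ e') ∧
  (∀ t ∈ T, t.card = 3) ∧
  (∀ t ∈ T, ∀ x ∈ t, ∀ y ∈ t, x ≠ y → G.Adj x y) ∧
  (∀ t ∈ T, ∀ t' ∈ T, t ≠ t' → ∀ v : V, v ∈ t → v ∉ t') ∧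
  (∀ v : V, (∃ e ∈ P, v ∈ e) ∨ (∃ t ∈ T, v ∈ t)) ∧
  (∀ v : V, ¬ ((∃ e ∈ P, v ∈ e) ∧ (∃ t ∈ T, v ∈ t)))

/-- A solution of a Partitioned Vertex Cover instance: a vertex cover `U` with
`|U ∩ P| = 1` for every pair `P` and `|U ∩ T| = 2` for every triple `T`. -/
def IsPVCSolution {V : Type u} (G : SimpleGraph V) (P : Set (Sym2 V)) (T : Set (Finset V))
    (U : Set V) : Prop :=
  IsVC G U ∧
  (∀ e ∈ P, {x : V | x ∈ e ∧ x ∈ U}.ncard = 1) ∧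
  (∀ t ∈ T, {x : V | x ∈ t ∧ x ∈ U}.ncard = 2)

/-- The vertices of the graph `H` built from a Partitioned Vertex Cover instance:
`a i`, `b i`, `c i`, `d i` for a vertex `i` of `G`; `u i j` is the vertex `u^e_i` for the
edge `e = {i,j}` of `G`; `f i j` is the vertex `f_{ij}` for the pair `{i,j} ∈ P`. -/
inductive Gad (V : Type u) : Type u where
  | a : V → Gad V
  | b : V → Gad V
  | c : V → Gad V
  | d : V → Gad V
  | u : V → V → Gad V
  | f : V → V → Gad V
deriving DecidableEq

/-- Which formal gadget vertices are really vertices of `H`. -/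
def Gad.valid {V : Type u} (G : SimpleGraph V) (P : Set (Sym2 V)) : Gad V → Prop
  | .u i j => G.Adj i j
  | .f i j => s(i, j) ∈ P
  | _ => True

/-- The edges of `H`, up to symmetry. -/
inductive HBase {V : Type u} (G : SimpleGraph V) (P : Set (Sym2 V)) (T : Set (Finset V)) :
    Gad V → Gad V → Prop where
  | da (i : V) : HBase G P T (.d i) (.a i)
  | ab (i : V) : HBase G P T (.a i) (.b i)
  | ac (i : V) : HBase G P T (.a i) (.c i)
  | bc (i : V) : HBase G P T (.b i) (.c i)
  | uu {i j : V} (h : G.Adj i j) : HBase G P T (.u i j) (.u j i)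
  | bu {i j : V} (h : G.Adj i j) : HBase G P T (.b i) (.u i j)
  | df {i j : V} (h : s(i, j) ∈ P) : HBase G P T (.d i) (.f i j)
  | fc {i j : V} (h : s(i, j) ∈ P) : HBase G P T (.f i j) (.c j)
  | cd {i j : V} (h : s(i, j) ∈ P) : HBase G P T (.c i) (.d j)
  | dd {i j : V} {t : Finset V} (ht : t ∈ T) (hi : i ∈ t) (hj : j ∈ t) (hne : i ≠ j) :
      HBase G P T (.d i) (.d j)
  | cc {i j : V} {t : Finset V} (ht : t ∈ T) (hi : i ∈ t) (hj : j ∈ t) (hne : i ≠ j) :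
      HBase G P T (.c i) (.c j)

/-- The graph `H` of the Popular Matching instance built from `(G, P, T)`. -/
def Hgraph {V : Type u} (G : SimpleGraph V) (P : Set (Sym2 V)) (T : Set (Finset V)) :
    SimpleGraph {g : Gad V // Gad.valid G P g} where
  Adj x y := x ≠ y ∧ (HBase G P T x.1 y.1 ∨ HBase G P T y.1 x.1)
  symm := ⟨fun _ _ h => ⟨h.1.symm, h.2.symm⟩⟩
  loopless := ⟨fun _ h => h.1 rfl⟩

/-- The Popular Matching instance (graph together with preference lists) constructed
from a Partitioned Vertex Cover instance `(G, P, T)`.  The field `pref` gives the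
preference lists; all its values on the neighborhoods in `H` are pinned down, except
the ranks that `b i` assigns to the vertices `u^e_i`, which form an arbitrary fixed
bijection onto `{2, …, deg_G(i) + 1}`. -/
structure Reduction (V : Type u) [LinearOrder V] : Type u where
  G : SimpleGraph V
  P : Set (Sym2 V)
  T : Set (Finset V)
  ispvc : IsPVC G P T
  pref : Gad V → Gad V → ℕ
  pref_ab : ∀ i : V, pref (.a i) (.b i) = 1
  pref_ac : ∀ i : V, pref (.a i) (.c i) = 2
  pref_ad : ∀ i : V, pref (.a i) (.d i) = 3
  pref_ba : ∀ i : V, pref (.b i) (.a i) = 1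
  pref_bu : ∀ i : V, Set.BijOn (pref (.b i)) {g : Gad V | ∃ j : V, G.Adj i j ∧ g = .u i j}
      (Set.Icc 2 ((G.neighborSet i).ncard + 1))
  pref_bc : ∀ i : V, pref (.b i) (.c i) = (G.neighborSet i).ncard + 2
  pref_ca : ∀ i : V, pref (.c i) (.a i) = 1
  pref_cb : ∀ i : V, pref (.c i) (.b i) = 2
  pref_da : ∀ i : V, pref (.d i) (.a i) = 1
  pref_uu : ∀ i j : V, G.Adj i j → pref (.u i j) (.u j i) = 1
  pref_ub : ∀ i j : V, G.Adj i j → pref (.u i j) (.b i) = 2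
  pref_cf : ∀ i j : V, s(i, j) ∈ P → pref (.c i) (.f j i) = 3
  pref_cd : ∀ i j : V, s(i, j) ∈ P → pref (.c i) (.d j) = 4
  pref_dc : ∀ i j : V, s(i, j) ∈ P → pref (.d i) (.c j) = 2
  pref_df : ∀ i j : V, s(i, j) ∈ P → pref (.d i) (.f i j) = 3
  pref_fd : ∀ i j : V, s(i, j) ∈ P → pref (.f i j) (.d i) = 1
  pref_fc : ∀ i j : V, s(i, j) ∈ P → pref (.f i j) (.c j) = 2
  pref_tri : ∀ t ∈ T, ∀ i j k : V, t = {i, j, k} → i < j → j < k →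
    pref (.c i) (.c k) = 3 ∧ pref (.c i) (.c j) = 4 ∧
    pref (.c j) (.c i) = 3 ∧ pref (.c j) (.c k) = 4 ∧
    pref (.c k) (.c j) = 3 ∧ pref (.c k) (.c i) = 4 ∧
    pref (.d i) (.d j) = 2 ∧ pref (.d i) (.d k) = 3 ∧
    pref (.d j) (.d k) = 2 ∧ pref (.d j) (.d i) = 3 ∧
    pref (.d k) (.d i) = 2 ∧ pref (.d k) (.d j) = 3

namespace Reduction

variable {V : Type u} [LinearOrder V] (R : Reduction V)

/-- The vertex set of `H`. -/
abbrev HV : Type u := {g : Gad V // Gad.valid R.G R.P g}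

/-- The graph `H`. -/
def H : SimpleGraph R.HV := Hgraph R.G R.P R.T

/-- The preference lists of `H`, as a function on its vertices. -/
def prefH : R.HV → R.HV → ℕ := fun x y => R.pref x.1 y.1

/-- The vertex `a_i` of `H`. -/
def va (i : V) : R.HV := ⟨.a i, trivial⟩
/-- The vertex `b_i` of `H`. -/
def vb (i : V) : R.HV := ⟨.b i, trivial⟩
/-- The vertex `c_i` of `H`. -/
def vc (i : V) : R.HV := ⟨.c i, trivial⟩
/-- The vertex `d_i` of `H`. -/
def vd (i : V) : R.HV := ⟨.d i, trivial⟩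
/-- The vertex `u^e_i` of `H`, for an edge `e = {i,j}` of `G`. -/
def vu (i j : V) (h : R.G.Adj i j) : R.HV := ⟨.u i j, h⟩
/-- The vertex `f_{ij}` of `H`, for a pair `{i,j} ∈ P`. -/
def vf (i j : V) (h : s(i, j) ∈ R.P) : R.HV := ⟨.f i j, h⟩

/-- The matching `M*` in `H` constructed from a solution `U`. -/
def Mstar (U : Set V) : Set (Sym2 R.HV) :=
  {e : Sym2 R.HV |
    (∃ (i j : V) (h : R.G.Adj i j), e = s(R.vu i j h, R.vu j i h.symm)) ∨
    (∃ (x y : V) (h : s(x, y) ∈ R.P) (h' : s(y, x) ∈ R.P), x ∉ U ∧ y ∈ U ∧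
      (e = s(R.va x, R.vd x) ∨ e = s(R.vb x, R.vc x) ∨ e = s(R.va y, R.vb y) ∨
       e = s(R.vf x y h, R.vc y) ∨ e = s(R.vf y x h', R.vd y))) ∨
    (∃ t ∈ R.T, ∃ x y z : V, t = {x, y, z} ∧ x ∉ U ∧ y ∈ U ∧ z ∈ U ∧ y ≠ z ∧
      R.pref (.d x) (.d y) < R.pref (.d x) (.d z) ∧
      (e = s(R.va x, R.vd x) ∨ e = s(R.vb x, R.vc x) ∨ e = s(R.va y, R.vb y) ∨
       e = s(R.va z, R.vb z) ∨ e = s(R.vc y, R.vc z) ∨ e = s(R.vd y, R.vd z)))}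

end Reduction

/-- The vertex set of the Pair Selector gadget associated with a pair `{i,j}`. -/
def pairGadget {V : Type u} (i j : V) : Set (Gad V) :=
  {g : Gad V | ∃ x : V, (x = i ∨ x = j) ∧ (g = .a x ∨ g = .b x ∨ g = .c x ∨ g = .d x)} ∪
    {Gad.f i j, Gad.f j i}

/-- The vertex set of the Triple Selector gadget associated with a triple `t`. -/
def tripleGadget {V : Type u} (t : Finset V) : Set (Gad V) :=
  {g : Gad V | ∃ x ∈ t, g = .a x ∨ g = .b x ∨ g = .c x ∨ g = .d x}

/-- The vertices of the graph built from a 3-SAT instance: `v x b` is the vertex of the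
literal on variable `x` with polarity `b`; `u c x b` is the vertex `u^C_ℓ` for the clause
`c = C` and the literal `ℓ = (x, b) ∈ C`. -/
inductive RVert (X : Type u) : Type u where
  | v : X → Bool → RVert X
  | u : Finset (X × Bool) → X → Bool → RVert X
deriving DecidableEq

/-- Which formal vertices are really vertices of the reduction graph. -/
def RVert.valid {X : Type u} (C : Finset (Finset (X × Bool))) : RVert X → Prop
  | .v _ _ => True
  | .u c x b => c ∈ C ∧ (x, b) ∈ c

/-- The edges of the reduction graph, up to symmetry. -/
def satAdj {X : Type u} : RVert X → RVert X → Prop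
  | .v x b, .v x' b' => x = x' ∧ b ≠ b'
  | .u c x b, .u c' x' b' => c = c' ∧ (x, b) ≠ (x', b')
  | .u _ x b, .v x' b' => x = x' ∧ b = b'
  | .v x b, .u _ x' b' => x = x' ∧ b = b'

/-- The vertex set of the reduction graph built from a 3-SAT instance. -/
def SATVert (X : Type u) (C : Finset (Finset (X × Bool))) : Type u :=
  {r : RVert X // RVert.valid C r}

/-- The reduction graph `G` built from a 3-SAT instance. -/
def SATgraph (X : Type u) (C : Finset (Finset (X × Bool))) : SimpleGraph (SATVert X C) where
  Adj a b := a ≠ b ∧ (satAdj a.1 b.1 ∨ satAdj b.1 a.1)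
  symm := ⟨fun _ _ h => ⟨h.1.symm, h.2.symm⟩⟩
  loopless := ⟨fun _ h => h.1 rfl⟩

/-- The truth assignment `α` satisfies every clause of `C`. -/
def Satisfies {X : Type u} (α : X → Bool) (C : Finset (Finset (X × Bool))) : Prop :=
  ∀ c ∈ C, ∃ l ∈ c, α l.1 = l.2

/-- The collection `𝒫` of pairs `{v_x, v_x̄}` in the reduction graph. -/
def SATPairs (X : Type u) (C : Finset (Finset (X × Bool))) : Set (Sym2 (SATVert X C)) :=
  {e : Sym2 (SATVert X C) |
    ∃ x : X, e = s((⟨.v x true, trivial⟩ : SATVert X C), (⟨.v x false, trivial⟩ : SATVert X C))}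

/-- The collection `𝒯` of triples `{u^C_p, u^C_q, u^C_r}` in the reduction graph. -/
def SATTriples (X : Type u) [DecidableEq X] (C : Finset (Finset (X × Bool))) :
    Set (Finset (SATVert X C)) :=
  {t : Finset (SATVert X C) |
    ∃ c ∈ C, ∀ r : SATVert X C, r ∈ t ↔ ∃ l ∈ c, r.1 = RVert.u c l.1 l.2}


/-! A vertex cover meets every pair of `𝒫` (an edge) in at least one vertex and every triangle
of `𝒯` in at least two. Since the members of `𝒫 ∪ 𝒯` partition the vertex set, every vertex cover
has at least `|𝒫| + 2|𝒯|` vertices, and one of at most that size meets each member in exactly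
one, respectively two, vertices, i.e. it is a solution. In the reduction graph `|𝒫| = |X|` and
`|𝒯| = |𝒞|`, so this bound is `k`. -/

section PartitionedVertexCover

variable {V : Type u} {G : SimpleGraph V} {P : Set (Sym2 V)} {T : Set (Finset V)}

def pvcPart (P : Set (Sym2 V)) (T : Set (Finset V)) : P ⊕ T → Set V :=
  Sum.elim (fun e => {x | x ∈ (e : Sym2 V)}) (fun t => ((t : Finset V) : Set V))

def pvcQuota : P ⊕ T → ℕ :=
  Sum.elim (fun _ => 1) (fun _ => 2)

lemma isPVCSolution_iff_forall_part {U : Set V} :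
    IsPVCSolution G P T U ↔ IsVC G U ∧ ∀ i, (pvcPart P T i ∩ U).ncard = pvcQuota i := by
  simp only [IsPVCSolution, Sum.forall, Subtype.forall]
  rfl

lemma IsVC.one_le_ncard_inter_edge {S : Set V} (hS : IsVC G S) {e : Sym2 V}
    (he : e ∈ G.edgeSet) [Finite V] : 1 ≤ ({x | x ∈ e} ∩ S).ncard := by
  induction e using Sym2.ind with
  | h x y =>
    rw [Nat.one_le_iff_ne_zero, ← Nat.pos_iff_ne_zero, Set.ncard_pos]
    rcases hS he with hx | hy
    · exact ⟨x, Sym2.mem_mk_left x y, hx⟩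
    · exact ⟨y, Sym2.mem_mk_right x y, hy⟩

lemma IsVC.card_le_ncard_inter_add_one {S : Set V} (hS : IsVC G S) {t : Finset V}
    (ht : G.IsClique (t : Set V)) : t.card ≤ ((t : Set V) ∩ S).ncard + 1 := by
  have hout : ((t : Set V) \ S).ncard ≤ 1 := by
    refine (Set.ncard_le_one t.finite_toSet.sdiff).2 fun x hx y hy => ?_
    by_contra hxy
    rcases hS (ht hx.1 hy.1 hxy) with h | h
    exacts [hx.2 h, hy.2 h]
  rw [← Set.ncard_coe_finset, ← Set.ncard_inter_add_ncard_sdiff_eq_ncard _ S]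
  omega

namespace IsPVC

lemma pairwise_disjoint_part (h : IsPVC G P T) :
    Pairwise (Function.onFun Disjoint (pvcPart P T)) := by
  obtain ⟨-, -, hP, -, -, hT, -, hPT⟩ := h
  rintro (⟨e, he⟩ | ⟨t, ht⟩) (⟨e', he'⟩ | ⟨t', ht'⟩) hne <;>
    refine Set.disjoint_left.2 fun v hv hv' => ?_
  · exact hP e he e' he' (fun h => hne (by subst h; rfl)) v hv hv'
  · exact hPT v ⟨⟨e, he, hv⟩, ⟨t', ht', hv'⟩⟩
  · exact hPT v ⟨⟨e', he', hv'⟩, ⟨t, ht, hv⟩⟩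
  · exact hT t ht t' ht' (fun h => hne (by subst h; rfl)) v hv hv'

lemma iUnion_part (h : IsPVC G P T) : ⋃ i, pvcPart P T i = Set.univ := by
  refine Set.eq_univ_of_forall fun v => ?_
  rcases h.2.2.2.2.2.2.1 v with ⟨e, he, hv⟩ | ⟨t, ht, hv⟩
  exacts [Set.mem_iUnion.2 ⟨.inl ⟨e, he⟩, hv⟩, Set.mem_iUnion.2 ⟨.inr ⟨t, ht⟩, hv⟩]

lemma ncard_eq_finsum (h : IsPVC G P T) (S : Set V) :
    S.ncard = ∑ᶠ i, (pvcPart P T i ∩ S).ncard := by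
  have := h.1
  rw [← Set.ncard_iUnion_of_finite (fun _ => Set.toFinite _)
    (fun i j hij => (h.pairwise_disjoint_part hij).mono Set.inter_subset_left Set.inter_subset_left),
    ← Set.iUnion_inter, h.iUnion_part, Set.univ_inter]

lemma quota_le_ncard_inter (h : IsPVC G P T) {S : Set V} (hS : IsVC G S) (i : P ⊕ T) :
    pvcQuota i ≤ (pvcPart P T i ∩ S).ncard := by
  have := h.1
  rcases i with ⟨e, he⟩ | ⟨t, ht⟩
  · exact hS.one_le_ncard_inter_edge (h.2.1 he)
  · have := hS.card_le_ncard_inter_add_one (h.2.2.2.2.1 t ht)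
    rw [h.2.2.2.1 t ht] at this
    change 2 ≤ ((t : Set V) ∩ S).ncard
    omega

lemma finsum_quota (h : IsPVC G P T) :
    ∑ᶠ i, pvcQuota (P := P) (T := T) i = P.ncard + 2 * T.ncard := by
  have := h.1
  have := Fintype.ofFinite P
  have := Fintype.ofFinite T
  rw [finsum_eq_sum_of_fintype, Fintype.sum_sum_type]
  simp [pvcQuota, mul_comm]

theorem exists_isVC_ncard_le_iff (h : IsPVC G P T) :
    (∃ S : Set V, S.Finite ∧ S.ncard ≤ P.ncard + 2 * T.ncard ∧ IsVC G S) ↔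
      ∃ U : Set V, IsPVCSolution G P T U := by
  have := h.1
  have := Fintype.ofFinite P
  have := Fintype.ofFinite T
  simp only [isPVCSolution_iff_forall_part, ← h.finsum_quota]
  constructor
  · rintro ⟨S, -, hcard, hS⟩
    have hle := h.quota_le_ncard_inter hS
    rw [h.ncard_eq_finsum S, finsum_eq_sum_of_fintype, finsum_eq_sum_of_fintype] at hcard
    have hsum := le_antisymm (Finset.sum_le_sum fun i _ => hle i) hcard
    exact ⟨S, hS, fun i => ((Finset.sum_eq_sum_iff_of_le fun i _ => hle i).1 hsum i
      (Finset.mem_univ i)).symm⟩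
  · rintro ⟨U, hU, hquota⟩
    exact ⟨U, U.toFinite, (h.ncard_eq_finsum U).trans_le (finsum_congr hquota).le, hU⟩

end IsPVC

end PartitionedVertexCover

section SATReduction

variable {X : Type u} {C : Finset (Finset (X × Bool))}

instance [Finite X] : Finite (RVert X) :=
  Finite.of_injective (β := (X × Bool) ⊕ (Finset (X × Bool) × X × Bool))
    (fun | .v x b => .inl (x, b) | .u c x b => .inr (c, x, b))
    (by rintro (_ | _) (_ | _) h <;> simp_all)

instance [Finite X] : Finite (SATVert X C) := Subtype.finite

lemma SATVert.ext_iff {r r' : SATVert X C} : r = r' ↔ r.1 = r'.1 := Subtype.ext_iff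

def litVert (C : Finset (Finset (X × Bool))) (x : X) (b : Bool) : SATVert X C :=
  ⟨.v x b, trivial⟩

def clauseVert {c : Finset (X × Bool)} (hc : c ∈ C) (l : X × Bool) (hl : l ∈ c) : SATVert X C :=
  ⟨.u c l.1 l.2, hc, hl⟩

@[simp] lemma litVert_val (x : X) (b : Bool) : (litVert C x b).1 = .v x b := rfl

def satPair (C : Finset (Finset (X × Bool))) (x : X) : Sym2 (SATVert X C) :=
  s(litVert C x true, litVert C x false)

lemma mem_satPair {x : X} {r : SATVert X C} : r ∈ satPair C x ↔ ∃ b, r.1 = .v x b := by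
  simp [satPair, SATVert.ext_iff, or_comm]

lemma satPair_mem_edgeSet (x : X) : satPair C x ∈ (SATgraph X C).edgeSet :=
  ⟨by simp [SATVert.ext_iff], Or.inl ⟨rfl, by decide⟩⟩

lemma SATPairs_eq_range : SATPairs X C = Set.range (satPair C) :=
  Set.ext fun _ => exists_congr fun _ => eq_comm

lemma ncard_SATPairs [Fintype X] : (SATPairs X C).ncard = Fintype.card X := by
  rw [SATPairs_eq_range, Set.ncard_range_of_injective, Nat.card_eq_fintype_card]
  intro x x' h
  obtain ⟨b, hb⟩ := mem_satPair.1 (h ▸ Sym2.mem_mk_left _ _ : litVert C x true ∈ satPair C x')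
  exact (RVert.v.inj hb).1

variable [DecidableEq X]

instance : DecidableEq (SATVert X C) := inferInstanceAs (DecidableEq (Subtype _))

def clauseTriple {c : Finset (X × Bool)} (hc : c ∈ C) : Finset (SATVert X C) :=
  c.attach.image fun l => clauseVert hc l.1 l.2

lemma mem_clauseTriple {c : Finset (X × Bool)} (hc : c ∈ C) {r : SATVert X C} :
    r ∈ clauseTriple hc ↔ ∃ l ∈ c, r.1 = .u c l.1 l.2 := by
  simp only [clauseTriple, Finset.mem_image, Finset.mem_attach, true_and, Subtype.exists]
  constructor
  · rintro ⟨l, hl, rfl⟩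
    exact ⟨l, hl, rfl⟩
  · rintro ⟨l, hl, hr⟩
    exact ⟨l, hl, SATVert.ext_iff.2 hr.symm⟩

lemma clauseVert_mem_clauseTriple {c : Finset (X × Bool)} (hc : c ∈ C) {l : X × Bool}
    (hl : l ∈ c) : clauseVert hc l hl ∈ clauseTriple hc :=
  (mem_clauseTriple hc).2 ⟨l, hl, rfl⟩

lemma card_clauseTriple {c : Finset (X × Bool)} (hc : c ∈ C) :
    (clauseTriple hc).card = c.card := by
  rw [clauseTriple, Finset.card_image_of_injective, Finset.card_attach]
  intro l l' h
  obtain ⟨-, h1, h2⟩ := RVert.u.inj (SATVert.ext_iff.1 h)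
  exact Subtype.ext (Prod.ext h1 h2)

lemma clauseTriple_isClique {c : Finset (X × Bool)} (hc : c ∈ C) :
    (SATgraph X C).IsClique (clauseTriple hc : Set (SATVert X C)) := by
  intro r hr r' hr' hne
  obtain ⟨l, -, hl⟩ := (mem_clauseTriple hc).1 hr
  obtain ⟨l', -, hl'⟩ := (mem_clauseTriple hc).1 hr'
  refine ⟨hne, Or.inl ?_⟩
  rw [hl, hl']
  exact ⟨rfl, fun h => hne (SATVert.ext_iff.2 (by rw [hl, hl', show l = l' from h]))⟩

lemma mem_SATTriples_iff {t : Finset (SATVert X C)} :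
    t ∈ SATTriples X C ↔ ∃ c, ∃ hc : c ∈ C, t = clauseTriple hc := by
  constructor
  · rintro ⟨c, hc, hmem⟩
    exact ⟨c, hc, Finset.ext fun r => (hmem r).trans (mem_clauseTriple hc).symm⟩
  · rintro ⟨c, hc, rfl⟩
    exact ⟨c, hc, fun r => mem_clauseTriple hc⟩

lemma clauseTriple_injective : Function.Injective fun c : C => clauseTriple c.2 := by
  have subset_of_eq {c c' : Finset (X × Bool)} (hc : c ∈ C) (hc' : c' ∈ C)
      (h : clauseTriple hc = clauseTriple hc') : c ⊆ c' := by
    intro l hl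
    obtain ⟨l', -, hl'⟩ := (mem_clauseTriple hc').1 (h ▸ clauseVert_mem_clauseTriple hc hl)
    obtain rfl := (RVert.u.inj hl').1
    exact hl
  rintro ⟨c, hc⟩ ⟨c', hc'⟩ h
  exact Subtype.ext ((subset_of_eq hc hc' h).antisymm (subset_of_eq hc' hc h.symm))

lemma SATTriples_eq_range : SATTriples X C = Set.range fun c : C => clauseTriple c.2 :=
  Set.ext fun _ => mem_SATTriples_iff.trans <| by simp [eq_comm]

lemma ncard_SATTriples : (SATTriples X C).ncard = C.card := by
  rw [SATTriples_eq_range, Set.ncard_range_of_injective clauseTriple_injective,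
    Nat.card_eq_fintype_card, Fintype.card_coe]

theorem isPVC_SATgraph [Finite X] (hC : ∀ c ∈ C, c.card = 3) :
    IsPVC (SATgraph X C) (SATPairs X C) (SATTriples X C) := by
  rw [SATPairs_eq_range]
  refine ⟨inferInstance, ?_, ?_, ?_, ?_, ?_, ?_, ?_⟩
  · rintro _ ⟨x, rfl⟩
    exact satPair_mem_edgeSet x
  · rintro _ ⟨x, rfl⟩ _ ⟨x', rfl⟩ hne v hv hv'
    obtain ⟨b, hb⟩ := mem_satPair.1 hv
    obtain ⟨b', hb'⟩ := mem_satPair.1 hv'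
    obtain rfl := (RVert.v.inj (hb.symm.trans hb')).1
    exact hne rfl
  · intro t ht
    obtain ⟨c, hc, rfl⟩ := mem_SATTriples_iff.1 ht
    rw [card_clauseTriple, hC c hc]
  · intro t ht
    obtain ⟨c, hc, rfl⟩ := mem_SATTriples_iff.1 ht
    exact fun x hx y hy => clauseTriple_isClique hc hx hy
  · intro t ht t' ht' hne v hv hv'
    obtain ⟨c, hc, rfl⟩ := mem_SATTriples_iff.1 ht
    obtain ⟨c', hc', rfl⟩ := mem_SATTriples_iff.1 ht'
    obtain ⟨l, -, hl⟩ := (mem_clauseTriple hc).1 hv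
    obtain ⟨l', -, hl'⟩ := (mem_clauseTriple hc').1 hv'
    obtain rfl := (RVert.u.inj (hl.symm.trans hl')).1
    exact hne rfl
  · rintro ⟨r | ⟨c, x, b⟩, hr⟩
    · exact .inl ⟨_, ⟨r, rfl⟩, mem_satPair.2 ⟨_, rfl⟩⟩
    · exact .inr ⟨clauseTriple hr.1, mem_SATTriples_iff.2 ⟨c, hr.1, rfl⟩,
        clauseVert_mem_clauseTriple hr.1 hr.2⟩
  · rintro v ⟨⟨_, ⟨x, rfl⟩, hv⟩, t, ht, hv'⟩
    obtain ⟨c, hc, rfl⟩ := mem_SATTriples_iff.1 ht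
    obtain ⟨b, hb⟩ := mem_satPair.1 hv
    obtain ⟨l, -, hl⟩ := (mem_clauseTriple hc).1 hv'
    cases hb.symm.trans hl

end SATReduction

/-- The output of the classic reduction from 3-SAT to Vertex Cover is a valid instance of
Partitioned Vertex Cover, and the reduction graph has a vertex cover of size at most
`k = |X| + 2|C|` if and only if the Partitioned Vertex Cover instance has a solution. -/
theorem sat_reduction_is_pvc {X : Type u} [Fintype X] [DecidableEq X]
    (C : Finset (Finset (X × Bool))) (hC : ∀ c ∈ C, c.card = 3) :
    IsPVC (SATgraph X C) (SATPairs X C) (SATTriples X C) ∧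
      ((∃ S : Set (SATVert X C), S.Finite ∧ S.ncard ≤ Fintype.card X + 2 * C.card ∧
          IsVC (SATgraph X C) S) ↔
        (∃ U : Set (SATVert X C),
          IsPVCSolution (SATgraph X C) (SATPairs X C) (SATTriples X C) U)) := by
  have h := isPVC_SATgraph hC
  refine ⟨h, ?_⟩
  rw [← ncard_SATPairs, ← ncard_SATTriples]
  exact h.exists_isVC_ncard_le_iff
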